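/- In the weak determinisation W̄(T), any two distinct edges with the same source state and the same input symbol are transient; hence W̄(T) is separable. -/
import Mathlib


variable {S G : Type}

def wordFG (w : List G) : FreeGroup G := (w.map FreeGroup.of).prod

def delta (v w : List G) : FreeGroup G := (wordFG v)⁻¹ * wordFG w

def dlen [DecidableEq G] (v w : List G) : ℕ := (delta v w).norm

def wpow (v : List G) (n : ℕ) : List G := (List.replicate n v).flatten

structure NFT (S G Q : Type) where
  E : Set (Q × S × List G × Q)
  I : Set Q
  F : Set Q
  out : Q → List G

namespace NFT

variable {Q Q₁ Q₂ : Type}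

inductive Run (T : NFT S G Q) : Q → List S → List G → Q → Prop
  | nil (q : Q) : Run T q [] [] q
  | cons {q q' q'' : Q} {a : S} {w : List G} {u : List S} {v : List G} :
      (q, a, w, q') ∈ T.E → Run T q' u v q'' → Run T q (a :: u) (w ++ v) q''

def Rel (T : NFT S G Q) (u : List S) (v : List G) : Prop :=
  ∃ i t w, i ∈ T.I ∧ t ∈ T.F ∧ T.Run i u w t ∧ v = w ++ T.out t

def Trim (T : NFT S G Q) : Prop :=
  ∀ q : Q, ∃ i t u₁ w₁ u₂ w₂, i ∈ T.I ∧ t ∈ T.F ∧ T.Run i u₁ w₁ q ∧ T.Run q u₂ w₂ t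

def WTP (T : NFT S G Q) : Prop :=
  ∀ q₁ q₂ (u v : List S) (u₁ u₂ v₁ v₂ : List G), T.Run q₁ u u₁ q₁ → T.Run q₁ v v₁ q₁ →
    T.Run q₁ u u₂ q₂ → T.Run q₂ v v₂ q₂ →
    delta u₁ u₂ = delta (u₁ ++ v₁) (u₂ ++ v₂)

def Seq (T : NFT S G Q) : Prop :=
  (∃ q₀, T.I = {q₀}) ∧
  ∀ q a w₁ q₁ w₂ q₂, (q, a, w₁, q₁) ∈ T.E → (q, a, w₂, q₂) ∈ T.E → w₁ = w₂ ∧ q₁ = q₂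

end NFT

def IsLCP (Sw : Set (List G)) (w : List G) : Prop :=
  (∀ x ∈ Sw, w <+: x) ∧ ∀ w', (∀ x ∈ Sw, w' <+: x) → w'.length ≤ w.length

open Classical in
noncomputable def lcp (Sw : Set (List G)) : List G :=
  if h : ∃ w, IsLCP Sw w then h.choose else []

def Rstep {Q : Type} (T : NFT S G Q) (U : Set (Q × List G)) (a : S) : Set (Q × List G) :=
  {qw | ∃ p u v, (p, u) ∈ U ∧ (p, a, v, qw.1) ∈ T.E ∧ qw.2 = u ++ v}

noncomputable def wstep {Q : Type} (T : NFT S G Q) (U : Set (Q × List G)) (a : S) : List G :=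
  lcp {w | ∃ q, (q, w) ∈ Rstep T U a}

noncomputable def Pstep {Q : Type} (T : NFT S G Q) (U : Set (Q × List G)) (a : S) :
    Set (Q × List G) :=
  {qw | (qw.1, wstep T U a ++ qw.2) ∈ Rstep T U a}

noncomputable def DRun {Q : Type} (T : NFT S G Q) :
    Set (Q × List G) → List S → List G × Set (Q × List G)
  | U, [] => ([], U)
  | U, a :: u =>
      let r := DRun T (Pstep T U a) u
      (wstep T U a ++ r.1, r.2)

def NFT.Reach {Q : Type} (T : NFT S G Q) (q q' : Q) : Prop := ∃ u w, T.Run q u w q'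

def NFT.SC {Q : Type} (T : NFT S G Q) (q q' : Q) : Prop := T.Reach q q' ∧ T.Reach q' q

def NFT.TransientE {Q : Type} (T : NFT S G Q) (e : Q × S × List G × Q) : Prop :=
  e ∈ T.E ∧ ¬ T.Reach e.2.2.2 e.1

def sccOf {Q : Type} (T : NFT S G Q) (q : Q) : Set Q := {q' | T.SC q q'}

/-- The rank of `U`: the set of SCCs of `T` accessible from the states occurring in `U`. -/
def rank {Q : Type} (T : NFT S G Q) (U : Set (Q × List G)) : Set (Set Q) :=
  {C | ∃ q₀, C = sccOf T q₀ ∧ ∃ pw ∈ U, T.Reach pw.1 q₀}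

/-- Edges of the weak determinisation `W̄(T)`: rank-preserving edges of `D̄(T)` are kept,
rank-decreasing edges `(U,σ|v,U')` are replaced by the edges `(U,σ|vw,{(q,ε)})` for `(q,w) ∈ U'`. -/
def WEdge {Q : Type} (T : NFT S G Q) (U : Set (Q × List G)) (a : S) (w : List G)
    (U' : Set (Q × List G)) : Prop :=
  (rank T (Pstep T U a) = rank T U ∧ w = wstep T U a ∧ U' = Pstep T U a) ∨
  (rank T (Pstep T U a) ≠ rank T U ∧
    ∃ q w', (q, w') ∈ Pstep T U a ∧ w = wstep T U a ++ w' ∧ U' = {(q, ([] : List G))})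

inductive WRun {Q : Type} (T : NFT S G Q) :
    Set (Q × List G) → List S → List G → Set (Q × List G) → Prop
  | nil (U : Set (Q × List G)) : WRun T U [] [] U
  | cons {U U' U'' : Set (Q × List G)} {a : S} {w : List G} {u : List S} {v : List G} :
      WEdge T U a w U' → WRun T U' u v U'' → WRun T U (a :: u) (w ++ v) U''

theorem NFT.Run.append {Q : Type} {T : NFT S G Q} {q q' q'' : Q} {u v : List S}
    {w x : List G} (h₁ : T.Run q u w q') (h₂ : T.Run q' v x q'') :
    T.Run q (u ++ v) (w ++ x) q'' := by
  induction h₁ with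
  | nil => simpa using h₂
  | cons he _ ih => simpa using NFT.Run.cons he (ih h₂)

theorem NFT.Reach.trans {Q : Type} {T : NFT S G Q} {a b c : Q}
    (h₁ : T.Reach a b) (h₂ : T.Reach b c) : T.Reach a c := by
  obtain ⟨u, w, r₁⟩ := h₁
  obtain ⟨v, x, r₂⟩ := h₂
  exact ⟨u ++ v, w ++ x, r₁.append r₂⟩

theorem rank_Pstep_subset {Q : Type} (T : NFT S G Q) (U : Set (Q × List G)) (a : S) :
    rank T (Pstep T U a) ⊆ rank T U := by
  rintro C ⟨q₀, rfl, ⟨p', w⟩, hp, hr⟩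
  obtain ⟨p, u, v, hpU, hE, -⟩ := hp
  refine ⟨q₀, rfl, (p, u), hpU, NFT.Reach.trans ⟨[a], v ++ [], NFT.Run.cons hE (NFT.Run.nil _)⟩ hr⟩

theorem rank_mem_subset {Q : Type} (T : NFT S G Q) {U : Set (Q × List G)} {q : Q}
    {w' : List G} (h : (q, w') ∈ U) : rank T {(q, ([] : List G))} ⊆ rank T U := by
  rintro C ⟨q₀, rfl, pw, hpw, hr⟩
  rcases hpw with rfl
  exact ⟨q₀, rfl, (q, w'), h, hr⟩

theorem wedge_rank_subset {Q : Type} {T : NFT S G Q} {U U' : Set (Q × List G)} {a : S}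
    {w : List G} (h : WEdge T U a w U') : rank T U' ⊆ rank T U := by
  rcases h with ⟨-, -, rfl⟩ | ⟨-, q, w', hmem, -, rfl⟩
  · exact rank_Pstep_subset T U a
  · exact (rank_mem_subset T hmem).trans (rank_Pstep_subset T U a)

theorem wrun_rank_subset {Q : Type} {T : NFT S G Q} {U U' : Set (Q × List G)}
    {u : List S} {v : List G} (h : WRun T U u v U') : rank T U' ⊆ rank T U := by
  induction h with
  | nil => exact le_refl _
  | cons he _ ih => exact ih.trans (wedge_rank_subset he)

/-- In `W̄(T)`, any two distinct edges with the same source and the same input symbol are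
transient (no run from their target back to their source); hence `W̄(T)` is separable. -/
theorem wdet_separable {Q : Type} (T : NFT S G Q) (q₀ : Q) (hI : T.I = {q₀})
    (htrim : T.Trim) :
    ∀ (U : Set (Q × List G)) (a : S) (w₁ : List G) (U₁ : Set (Q × List G)) (w₂ U₂),
      WEdge T U a w₁ U₁ → WEdge T U a w₂ U₂ → (w₁, U₁) ≠ (w₂, U₂) →
      (¬ ∃ u v, WRun T U₁ u v U) ∧ (¬ ∃ u v, WRun T U₂ u v U) := by
  intro U a w₁ U₁ w₂ U₂ h₁ h₂ hne
  have key : ∀ {w U'} , WEdge T U a w U' → rank T (Pstep T U a) ≠ rank T U →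
      ¬ ∃ u v, WRun T U' u v U := by
    rintro w U' he hrk ⟨u, v, hrun⟩
    rcases he with ⟨hr, -, -⟩ | ⟨-, q, w', hmem, -, rfl⟩
    · exact hrk hr
    · have h1 : rank T U ⊆ rank T (Pstep T U a) :=
        (wrun_rank_subset hrun).trans (rank_mem_subset T hmem)
      exact hrk (le_antisymm (rank_Pstep_subset T U a) h1)
  by_cases hrk : rank T (Pstep T U a) = rank T U
  · exfalso
    rcases h₁ with ⟨-, rfl, rfl⟩ | ⟨hne', -⟩
    · rcases h₂ with ⟨-, rfl, rfl⟩ | ⟨hne', -⟩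
      · exact hne rfl
      · exact hne' hrk
    · exact hne' hrk
  · exact ⟨key h₁ hrk, key h₂ hrk⟩
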